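/- arXiv:2403.13898 — 7 statements merged into one kernel-verified Lean document; each statement's English description precedes it below -/
import Mathlib

section
/- Let ψ(v) = exp(-v²/(2σ²)) and φ(v,s) = ψ(v-s) + ψ(v+s) for σ > 0. Then for any bounded, measurable, non-decreasing function V : ℝ≥0 → ℝ≥0 and any 0 ≤ s ≤ s', ∫_{0}^{∞} φ(v, s') V(v) dv ≥ ∫_{0}^{∞} φ(v, s) V(v) dv. -/
open MeasureTheory Real Set

namespace FoldedGaussAux

noncomputable def ψ (σ v : ℝ) : ℝ := Real.exp (-v ^ 2 / (2 * σ ^ 2))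

lemma ψ_nonneg (σ v : ℝ) : 0 ≤ ψ σ v := (Real.exp_pos _).le

lemma integrable_ψ {σ : ℝ} (hσ : 0 < σ) : Integrable (ψ σ) := by
  have hb : (0:ℝ) < (2 * σ ^ 2)⁻¹ := by positivity
  have h := integrable_exp_neg_mul_sq hb
  refine h.congr (Filter.Eventually.of_forall fun v => ?_)
  simp only [ψ]
  congr 1
  field_simp

lemma continuous_ψ (σ : ℝ) : Continuous (ψ σ) := by
  unfold ψ; fun_prop

lemma shift_Ioi {σ : ℝ} (c s : ℝ) :
    ∫ v in Ioi c, ψ σ (v - s) = ∫ v in Ioi (c - s), ψ σ v := by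
  rw [← integral_indicator measurableSet_Ioi, ← integral_indicator measurableSet_Ioi]
  have hind : (Ioi c).indicator (fun v => ψ σ (v - s))
      = fun v => (Ioi (c - s)).indicator (ψ σ) (v - s) := by
    funext v
    by_cases h : v ∈ Ioi c
    · rw [indicator_of_mem h, indicator_of_mem (by exact sub_lt_sub_right h s)]
    · rw [indicator_of_notMem h, indicator_of_notMem]
      intro hm
      rw [mem_Ioi] at hm
      exact h (mem_Ioi.mpr (by linarith))
  rw [hind]
  exact integral_sub_right_eq_self ((Ioi (c - s)).indicator (ψ σ)) s

lemma tail_split {σ : ℝ} (hσ : 0 < σ) {a b : ℝ} (hab : a ≤ b) :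
    ∫ v in Ioi a, ψ σ v = (∫ v in Ioc a b, ψ σ v) + ∫ v in Ioi b, ψ σ v := by
  rw [← Ioc_union_Ioi_eq_Ioi hab,
    setIntegral_union Ioc_disjoint_Ioi_same measurableSet_Ioi
      (integrable_ψ hσ).integrableOn (integrable_ψ hσ).integrableOn]

lemma refl_le {σ : ℝ} (hσ : 0 < σ) {c s s' : ℝ} (hc : 0 ≤ c) (hs : 0 ≤ s) (hss' : s ≤ s') :
    ∫ v in Ioc (c + s) (c + s'), ψ σ v ≤ ∫ v in Ioc (c - s') (c - s), ψ σ v := by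
  have h1 : c - s' ≤ c - s := by linarith
  have h2 : c + s ≤ c + s' := by linarith
  rw [← intervalIntegral.integral_of_le h2, ← intervalIntegral.integral_of_le h1]
  have key := intervalIntegral.integral_comp_sub_left (a := c - s') (b := c - s)
    (f := ψ σ) (2 * c)
  have e1 : 2 * c - (c - s) = c + s := by ring
  have e2 : 2 * c - (c - s') = c + s' := by ring
  rw [e1, e2] at key
  rw [← key]
  apply intervalIntegral.integral_mono_on h1
    (((integrable_ψ hσ).comp_sub_left (2 * c)).intervalIntegrable)
    ((integrable_ψ hσ).intervalIntegrable)
  intro x hx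
  have hxc : x ≤ c := le_trans hx.2 (by linarith)
  simp only [ψ]
  apply Real.exp_le_exp.mpr
  have hpos : (0:ℝ) < 2 * σ ^ 2 := by positivity
  rw [div_le_div_iff_of_pos_right hpos]
  nlinarith [mul_nonneg hc (sub_nonneg.mpr hxc)]

lemma tail_mono {σ : ℝ} (hσ : 0 < σ) {c s s' : ℝ} (hc : 0 ≤ c) (hs : 0 ≤ s) (hss' : s ≤ s') :
    ∫ v in Ioi c, (ψ σ (v - s) + ψ σ (v + s)) ≤ ∫ v in Ioi c, (ψ σ (v - s') + ψ σ (v + s')) := by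
  have hint := integrable_ψ hσ
  have hA : ∀ t : ℝ, ∫ v in Ioi c, (ψ σ (v - t) + ψ σ (v + t))
      = (∫ v in Ioi (c - t), ψ σ v) + ∫ v in Ioi (c + t), ψ σ v := by
    intro t
    rw [integral_add (hint.comp_sub_right t).integrableOn (hint.comp_add_right t).integrableOn]
    have h2 := shift_Ioi (σ := σ) c (-t)
    simp only [sub_neg_eq_add] at h2
    rw [shift_Ioi c t, h2]
  rw [hA s, hA s']
  have t1 := tail_split hσ (show c - s' ≤ c - s by linarith)
  have t2 := tail_split hσ (show c + s ≤ c + s' by linarith)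
  have t3 := refl_le hσ hc hs hss'
  linarith

lemma ltail_mono {σ : ℝ} (hσ : 0 < σ) {c s s' : ℝ} (hc : 0 ≤ c) (hs : 0 ≤ s) (hss' : s ≤ s') :
    ∫⁻ v in Ioi c, ENNReal.ofReal (ψ σ (v - s) + ψ σ (v + s))
      ≤ ∫⁻ v in Ioi c, ENNReal.ofReal (ψ σ (v - s') + ψ σ (v + s')) := by
  have hint := integrable_ψ hσ
  have h1 : ∀ t : ℝ, Integrable (fun v => ψ σ (v - t) + ψ σ (v + t))
      (volume.restrict (Ioi c)) :=
    fun t => ((hint.comp_sub_right t).add (hint.comp_add_right t)).integrableOn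
  have hnn : ∀ t : ℝ, (0 : ℝ → ℝ) ≤ᵐ[volume.restrict (Ioi c)]
      fun v => ψ σ (v - t) + ψ σ (v + t) :=
    fun t => Filter.Eventually.of_forall fun v => add_nonneg (ψ_nonneg _ _) (ψ_nonneg _ _)
  rw [← ofReal_integral_eq_lintegral_ofReal (h1 s) (hnn s),
      ← ofReal_integral_eq_lintegral_ofReal (h1 s') (hnn s')]
  exact ENNReal.ofReal_le_ofReal (tail_mono hσ hc hs hss')

end FoldedGaussAux

/-- Folded-Gaussian stochastic dominance: integrating a bounded, measurable,
non-negative, non-decreasing function `V` on `[0,∞)` against the folded kernel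
`φ(v,s) = exp(-(v-s)²/(2σ²)) + exp(-(v+s)²/(2σ²))` gives a quantity that is
non-decreasing in the location parameter `s ≥ 0`. -/
theorem stmt_0 (σ : ℝ) (hσ : 0 < σ)
    (V : ℝ → ℝ) (hVmeas : Measurable V)
    (hVbdd : ∃ C : ℝ, ∀ v, V v ≤ C)
    (hVnonneg : ∀ v, 0 ≤ V v)
    (hVmono : MonotoneOn V (Set.Ici 0))
    (s s' : ℝ) (hs : 0 ≤ s) (hss' : s ≤ s') :
    ∫ v in Set.Ioi (0 : ℝ),
        (Real.exp (-(v - s)^2 / (2 * σ^2)) + Real.exp (-(v + s)^2 / (2 * σ^2))) * V v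
      ≤ ∫ v in Set.Ioi (0 : ℝ),
        (Real.exp (-(v - s')^2 / (2 * σ^2)) + Real.exp (-(v + s')^2 / (2 * σ^2))) * V v := by
  obtain ⟨C, hC⟩ := hVbdd
  set φ : ℝ → ℝ → ℝ := fun t v => FoldedGaussAux.ψ σ (v - t) + FoldedGaussAux.ψ σ (v + t)
    with hφdef
  have hstmt : ∀ t v : ℝ, (Real.exp (-(v - t)^2 / (2 * σ^2))
      + Real.exp (-(v + t)^2 / (2 * σ^2))) = φ t v := fun t v => rfl
  simp only [hstmt]
  have hint := FoldedGaussAux.integrable_ψ hσ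
  have hφint : ∀ t, Integrable (φ t) := fun t =>
    (hint.comp_sub_right t).add (hint.comp_add_right t)
  have hφmeas : ∀ t, Measurable (φ t) := fun t =>
    (((FoldedGaussAux.continuous_ψ σ).comp (continuous_id.sub continuous_const)).measurable).add
    (((FoldedGaussAux.continuous_ψ σ).comp (continuous_id.add continuous_const)).measurable)
  have hφnn : ∀ t v, 0 ≤ φ t v := fun t v =>
    add_nonneg (FoldedGaussAux.ψ_nonneg _ _) (FoldedGaussAux.ψ_nonneg _ _)
  have hVnorm : ∃ C', ∀ x, ‖V x‖ ≤ C' :=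
    ⟨C, fun x => by rw [Real.norm_eq_abs, abs_of_nonneg (hVnonneg x)]; exact hC x⟩
  have hprodint : ∀ t, Integrable (fun v => φ t v * V v) (volume.restrict (Ioi 0)) := by
    intro t
    have h : Integrable (fun v => V v * φ t v) (volume.restrict (Ioi 0)) :=
      Integrable.bdd_mul (hφint t).integrableOn hVmeas.aestronglyMeasurable
        (Filter.Eventually.of_forall hVnorm.choose_spec)
    exact h.congr (Filter.Eventually.of_forall fun v => mul_comm _ _)
  set μm : ℝ → Measure ℝ := fun t =>
    (volume.restrict (Ioi (0:ℝ))).withDensity (fun v => ENNReal.ofReal (φ t v)) with hμm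
  have hkey : ∀ t : ℝ, ∫⁻ v in Ioi (0:ℝ), ENNReal.ofReal (φ t v * V v)
      = ∫⁻ r in Ioi (0:ℝ), μm t {a | r < V a} := by
    intro t
    have h1 : ∫⁻ v in Ioi (0:ℝ), ENNReal.ofReal (φ t v * V v)
        = ∫⁻ v, ENNReal.ofReal (V v) ∂(μm t) := by
      rw [hμm]
      rw [lintegral_withDensity_eq_lintegral_mul _ ((hφmeas t).ennreal_ofReal)
        (hVmeas.ennreal_ofReal)]
      refine lintegral_congr fun v => ?_
      simp [ENNReal.ofReal_mul (hφnn t v)]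
    rw [h1]
    exact lintegral_eq_lintegral_meas_lt (μm t)
      (Filter.Eventually.of_forall hVnonneg) hVmeas.aemeasurable
  have hmeasset : ∀ r : ℝ, MeasurableSet {a : ℝ | r < V a} := fun r =>
    measurableSet_lt measurable_const hVmeas
  have hcomp : ∀ r : ℝ, μm s {a | r < V a} ≤ μm s' {a | r < V a} := by
    intro r
    have happ : ∀ t, μm t {a | r < V a}
        = ∫⁻ v in ({a | r < V a} ∩ Ioi 0), ENNReal.ofReal (φ t v) := by
      intro t
      rw [hμm]
      rw [withDensity_apply _ (hmeasset r), Measure.restrict_restrict (hmeasset r)]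
    rw [happ s, happ s']
    set T : Set ℝ := {a | r < V a} ∩ Ioi 0 with hT
    rcases eq_empty_or_nonempty T with hTe | hne
    · rw [hTe]; simp
    · set c := sInf T with hcdef
      have hbdd : BddBelow T := ⟨0, fun x hx => hx.2.le⟩
      have hc0 : 0 ≤ c := le_csInf hne fun x hx => hx.2.le
      have hsub1 : Ioi c ⊆ T := by
        intro v hv
        obtain ⟨u, huT, huv⟩ := (csInf_lt_iff hbdd hne).mp hv
        have hv0 : 0 < v := lt_of_le_of_lt hc0 hv
        exact ⟨lt_of_lt_of_le huT.1 (hVmono (mem_Ici.mpr huT.2.le) (mem_Ici.mpr hv0.le) huv.le), hv0⟩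
      have hsub2 : T ⊆ Ici c := fun x hx => csInf_le hbdd hx
      have hae : T =ᵐ[volume] Ioi c := by
        rw [MeasureTheory.ae_eq_set]
        constructor
        · refine measure_mono_null (fun x hx => ?_) (measure_singleton c)
          have h1 := hsub2 hx.1
          have h2 : ¬ c < x := hx.2
          simp only [mem_Ici] at h1
          simp [le_antisymm (not_lt.mp h2) h1]
        · rw [diff_eq_empty.mpr hsub1]; exact measure_empty
      rw [setLIntegral_congr hae, setLIntegral_congr hae]
      exact FoldedGaussAux.ltail_mono hσ hc0 hs hss'
  have hfin : ∫⁻ v in Ioi (0:ℝ), ENNReal.ofReal (φ s' v * V v) ≠ ⊤ := by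
    rw [← ofReal_integral_eq_lintegral_ofReal (hprodint s')
      (Filter.Eventually.of_forall fun v => mul_nonneg (hφnn s' v) (hVnonneg v))]
    exact ENNReal.ofReal_ne_top
  have hrealrep : ∀ t, ∫ v in Ioi (0:ℝ), φ t v * V v
      = (∫⁻ v in Ioi (0:ℝ), ENNReal.ofReal (φ t v * V v)).toReal := by
    intro t
    exact integral_eq_lintegral_of_nonneg_ae
      (Filter.Eventually.of_forall fun v => mul_nonneg (hφnn t v) (hVnonneg v))
      ((hφmeas t).mul hVmeas).aestronglyMeasurable
  rw [hrealrep s, hrealrep s']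
  apply ENNReal.toReal_mono hfin
  rw [hkey s, hkey s']
  exact lintegral_mono fun r => hcomp r
end

section
/- For σ > 0, a ∈ ℝ, and any s' ≥ s ≥ 0, the folded Gaussian density v ↦ (1/√(2πσ²))(exp(-(v-s)²/(2σ²)) + exp(-(v+s)²/(2σ²))) on [0,∞) with parameter s' first-order stochastically dominates the one with parameter s; that is, for every threshold r ≥ 0, ∫_r^∞ [exp(-(v-s')²/(2σ²)) + exp(-(v+s')²/(2σ²))] dv ≥ ∫_r^∞ [exp(-(v-s)²/(2σ²)) + exp(-(v+s)²/(2σ²))] dv. -/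
open MeasureTheory Real Set

/-- First-order stochastic dominance of folded Gaussian distributions in the
location parameter: for `s' ≥ s ≥ 0` and any threshold `r ≥ 0`, the unnormalized
tail mass of the folded Gaussian with parameter `s'` beyond `r` is at least
that of the one with parameter `s`. -/
theorem stmt_1 (σ : ℝ) (hσ : 0 < σ) (a : ℝ)
    (s s' : ℝ) (hs : 0 ≤ s) (hss' : s ≤ s')
    (r : ℝ) (hr : 0 ≤ r) :
    ∫ v in Set.Ioi r,
        (Real.exp (-(v - s)^2 / (2 * σ^2)) + Real.exp (-(v + s)^2 / (2 * σ^2)))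
      ≤ ∫ v in Set.Ioi r,
        (Real.exp (-(v - s')^2 / (2 * σ^2)) + Real.exp (-(v + s')^2 / (2 * σ^2))) := by
  have hcpos : (0:ℝ) < 2 * σ^2 := by positivity
  set φ : ℝ → ℝ := fun v => Real.exp (-v^2 / (2 * σ^2)) with hφ
  have hφcont : Continuous φ := by
    apply Continuous.rexp; fun_prop
  have hint : Integrable φ := by
    have h : Integrable (fun v : ℝ => Real.exp (-(1/(2*σ^2)) * v^2)) :=
      integrable_exp_neg_mul_sq (by positivity)
    refine h.congr ?_
    filter_upwards with v
    congr 1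
    field_simp
  -- translation
  have trans : ∀ t u : ℝ, (∫ v in Ioi u, φ (v - t)) = ∫ v in Ioi (u - t), φ v := by
    intro t u
    have hmp : MeasurePreserving (fun x : ℝ => x - t) volume volume :=
      measurePreserving_sub_right volume t
    have hemb : MeasurableEmbedding (fun x : ℝ => x - t) :=
      (Homeomorph.subRight t).measurableEmbedding
    have := hmp.setIntegral_preimage_emb hemb φ (Ioi (u - t))
    have hpre : (fun x : ℝ => x - t) ⁻¹' Ioi (u - t) = Ioi u := by
      ext x; simp [sub_lt_sub_iff_right]
    rw [hpre] at this
    exact this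
  -- splitting
  have split : ∀ x y : ℝ, x ≤ y →
      (∫ v in Ioi x, φ v) = (∫ v in Ioc x y, φ v) + ∫ v in Ioi y, φ v := by
    intro x y hxy
    rw [← Ioc_union_Ioi_eq_Ioi hxy,
      setIntegral_union (Ioc_disjoint_Ioi le_rfl) measurableSet_Ioi
        hint.integrableOn hint.integrableOn]
  -- reflection + pointwise comparison on the middle pieces
  have key : (∫ v in Ioc (r + s) (r + s'), φ v) ≤ ∫ v in Ioc (r - s') (r - s), φ v := by
    have h1 : r - s' ≤ r - s := by linarith
    have h2 : r + s ≤ r + s' := by linarith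
    have hrefl : (∫ v in Ioc (r + s) (r + s'), φ v)
        = ∫ v in Ioc (r - s') (r - s), φ (2 * r - v) := by
      rw [← intervalIntegral.integral_of_le h2, ← intervalIntegral.integral_of_le h1]
      have := intervalIntegral.integral_comp_sub_left (a := r - s') (b := r - s) φ (2 * r)
      rw [this]
      norm_num
      ring_nf
    rw [hrefl]
    apply setIntegral_mono_on
    · exact (hφcont.comp (by fun_prop)).integrableOn_Ioc
    · exact hφcont.integrableOn_Ioc
    · exact measurableSet_Ioc
    · intro v hv
      have hv2 : v ≤ r - s := hv.2
      have : v^2 ≤ (2 * r - v)^2 := by nlinarith [hv.2, hr, hs]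
      simp only [hφ]
      apply Real.exp_le_exp.mpr
      gcongr
  -- rewrite both sides
  have hL : ∀ t : ℝ, (∫ v in Ioi r,
      (Real.exp (-(v - t)^2 / (2 * σ^2)) + Real.exp (-(v + t)^2 / (2 * σ^2))))
      = (∫ v in Ioi (r - t), φ v) + ∫ v in Ioi (r + t), φ v := by
    intro t
    have hi1 : IntegrableOn (fun v => φ (v - t)) (Ioi r) volume :=
      (hint.comp_sub_right t).integrableOn
    have hi2 : IntegrableOn (fun v => φ (v + t)) (Ioi r) volume :=
      (hint.comp_add_right t).integrableOn
    have : (∫ v in Ioi r,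
        (Real.exp (-(v - t)^2 / (2 * σ^2)) + Real.exp (-(v + t)^2 / (2 * σ^2))))
        = (∫ v in Ioi r, φ (v - t)) + ∫ v in Ioi r, φ (v + t) :=
      integral_add hi1 hi2
    rw [this, trans t r]
    congr 1
    have := trans (-t) r
    simpa [sub_neg_eq_add] using this
  rw [hL s, hL s']
  have e1 := split (r - s') (r - s) (by linarith)
  have e2 := split (r + s) (r + s') (by linarith)
  rw [e1, e2]
  linarith [key]
end

section
/- Define the value iterates of the risk-sensitive remote-estimation MDP by V₀(Δ,c) = 1 and V_{t+1}(Δ,c) = min(Q_{t+1}(Δ,c;0), Q_{t+1}(Δ,c;1)), where Q_{t+1}(Δ,c;0) = e^{γΔ²} Σ_{c₊∈{0,1}} p_{c c₊} ∫_ℝ e^{-(Δ₊ - aΔ)²/(2σ²)} V_t(Δ₊,c₊) dΔ₊ and Q_{t+1}(Δ,c;1) = (1-c) e^{γ(λ+Δ²)} Σ_{c₊} p_{c c₊} ∫_ℝ e^{-(Δ₊ - aΔ)²/(2σ²)} V_t(Δ₊,c₊) dΔ₊ + c e^{γλ} Σ_{c₊} p_{c c₊} ∫_ℝ e^{-Δ₊²/(2σ²)}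 V_t(Δ₊,c₊) dΔ₊. Then for every t ≥ 0, each c ∈ {0,1}, and each u ∈ {0,1}, the functions Δ ↦ V_t(Δ,c) and Δ ↦ Q_t(Δ,c;u) are even functions of Δ ∈ ℝ. -/
open MeasureTheory Real

/-- Evenness of the risk-sensitive value iterates: the value-iteration iterates
`V_t(·,c)` and Q-functions `Q_{t+1}(·,c;u)` of the remote-estimation MDP are
even functions of the error `Δ`. -/
theorem stmt_2 (a σ γ lam : ℝ) (hσ : 0 < σ) (hγ : 0 < γ) (hlam : 0 < lam)
    (p : Fin 2 → Fin 2 → ℝ) (hp : ∀ c c', 0 ≤ p c c') (hp1 : ∀ c, p c 0 + p c 1 = 1)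
    (V : ℕ → ℝ → Fin 2 → ℝ) (Q : ℕ → ℝ → Fin 2 → Fin 2 → ℝ)
    (hV0 : ∀ Δ c, V 0 Δ c = 1)
    (hQ0 : ∀ t Δ c, Q (t + 1) Δ c 0 =
      Real.exp (γ * Δ^2) * ∑ cp : Fin 2, p c cp *
        ∫ dp : ℝ, Real.exp (-(dp - a * Δ)^2 / (2 * σ^2)) * V t dp cp)
    (hQ1 : ∀ t Δ c, Q (t + 1) Δ c 1 =
      (1 - ((c : ℕ) : ℝ)) * Real.exp (γ * (lam + Δ^2)) * ∑ cp : Fin 2, p c cp *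
        (∫ dp : ℝ, Real.exp (-(dp - a * Δ)^2 / (2 * σ^2)) * V t dp cp)
      + ((c : ℕ) : ℝ) * Real.exp (γ * lam) * ∑ cp : Fin 2, p c cp *
        (∫ dp : ℝ, Real.exp (-(dp)^2 / (2 * σ^2)) * V t dp cp))
    (hVsucc : ∀ t Δ c, V (t + 1) Δ c = min (Q (t + 1) Δ c 0) (Q (t + 1) Δ c 1)) :
    (∀ t (Δ : ℝ) (c : Fin 2), V t Δ c = V t (-Δ) c) ∧
    (∀ t (Δ : ℝ) (c u : Fin 2), Q (t + 1) Δ c u = Q (t + 1) (-Δ) c u) := by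
  -- key: if V t is even, then the convolution integral is even in Δ
  have key : ∀ t, (∀ (Δ : ℝ) (c : Fin 2), V t Δ c = V t (-Δ) c) →
      ∀ (Δ : ℝ) (cp : Fin 2),
        (∫ dp : ℝ, Real.exp (-(dp - a * Δ)^2 / (2 * σ^2)) * V t dp cp)
        = ∫ dp : ℝ, Real.exp (-(dp - a * (-Δ))^2 / (2 * σ^2)) * V t dp cp := by
    intro t hVe Δ cp
    have := MeasureTheory.integral_neg_eq_self
      (fun dp : ℝ => Real.exp (-(dp - a * (-Δ))^2 / (2 * σ^2)) * V t dp cp)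
    rw [← this]
    congr 1
    funext dp
    rw [← hVe dp cp]
    congr 2
    ring
  -- evenness of V propagates
  have main : ∀ t, (∀ (Δ : ℝ) (c : Fin 2), V t Δ c = V t (-Δ) c) ∧
      (∀ (Δ : ℝ) (c u : Fin 2), Q (t + 1) Δ c u = Q (t + 1) (-Δ) c u) := by
    intro t
    induction t with
    | zero =>
      have hVe : ∀ (Δ : ℝ) (c : Fin 2), V 0 Δ c = V 0 (-Δ) c := by
        intro Δ c; rw [hV0, hV0]
      refine ⟨hVe, ?_⟩
      intro Δ c u
      fin_cases u
      · show Q (0 + 1) Δ c 0 = Q (0 + 1) (-Δ) c 0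
        rw [hQ0, hQ0]
        simp only [key 0 hVe Δ]
        rw [neg_sq]
      · show Q (0 + 1) Δ c 1 = Q (0 + 1) (-Δ) c 1
        rw [hQ1, hQ1]
        simp only [key 0 hVe Δ]
        rw [neg_sq]
    | succ t ih =>
      have hVe : ∀ (Δ : ℝ) (c : Fin 2), V (t + 1) Δ c = V (t + 1) (-Δ) c := by
        intro Δ c
        rw [hVsucc, hVsucc, ih.2 Δ c 0, ih.2 Δ c 1]
      refine ⟨hVe, ?_⟩
      intro Δ c u
      fin_cases u
      · show Q (t + 1 + 1) Δ c 0 = Q (t + 1 + 1) (-Δ) c 0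
        rw [hQ0, hQ0]
        simp only [key (t + 1) hVe Δ]
        rw [neg_sq]
      · show Q (t + 1 + 1) Δ c 1 = Q (t + 1 + 1) (-Δ) c 1
        rw [hQ1, hQ1]
        simp only [key (t + 1) hVe Δ]
        rw [neg_sq]
  exact ⟨fun t => (main t).1, fun t => (main t).2⟩
end

section
/- With the value iteration defined as in the risk-sensitive remote-estimation MDP (V₀ = 1, V_{t+1} = min over u ∈ {0,1} of Q_{t+1}(·,·;u)), and the folded value iteration defined on ℝ≥0 × {0,1} by Ṽ₀ = 1, Q̃_{t+1}(Δ,c;0) = e^{γΔ²} Σ_{c₊} p_{c c₊} ∫_{[0,∞)} [e^{-(Δ₊-aΔ)²/(2σ²)} + e^{-(Δ₊+aΔ)²/(2σ²)}] Ṽ_t(Δ₊,c₊) dΔ₊, Q̃_{t+1}(Δ,c;1) = (1-c) e^{γ(λ+Δ²)} Σ_{c₊} p_{c c₊} ∫_{[0,∞)} [e^{-(Δ₊-aΔ)²/(2σ²)} + e^{-(Δ₊+aΔ)²/(2σ²)}] Ṽ_t(Δ₊,c₊) dΔ₊ + 2c e^{γλ} Σ_{c₊} p_{c c₊} ∫_{[0,∞)}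 e^{-Δ₊²/(2σ²)} Ṽ_t(Δ₊,c₊) dΔ₊, and Ṽ_{t+1} = min over u of Q̃_{t+1}: then for all t, all Δ ∈ ℝ, all c, u ∈ {0,1}, Q_t(Δ,c;u) = Q̃_t(|Δ|,c;u) and V_t(Δ,c) = Ṽ_t(|Δ|,c). -/
/-!
Under `Δ ↦ -Δ` the Gaussian transition density `e^{-(Δ₊ - aΔ)²/(2σ²)}` turns into the one
centred at `-aΔ`, and the cost `e^{γΔ²}` is unchanged. Hence, by induction on `t`, each `V t` is
even in `Δ`, and integrating an even function against a kernel `F` over `ℝ` equals integrating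
it against the folded kernel `F(x) + F(-x)` over `[0, ∞)`; the reset kernel `e^{-Δ₊²/(2σ²)}` is
itself even, so folding it only doubles it.
-/

open MeasureTheory Real Set

section Folding

variable {F g W : ℝ → ℝ}

/-- The weight `F x / (F x + F (-x)) ∈ (0, 1]` is bounded and measurable, so no measurability
of `g` is needed. -/
lemma integrable_mul_of_integrable_add_comp_neg_mul (hF : Measurable F) (hF_pos : ∀ x, 0 < F x)
    (h : Integrable (fun x => (F x + F (-x)) * g x)) : Integrable (fun x => F x * g x) := by
  have hsum_pos : ∀ x, 0 < F x + F (-x) := fun x => add_pos (hF_pos x) (hF_pos (-x))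
  have hweight_le : ∀ x, ‖F x / (F x + F (-x))‖ ≤ 1 := fun x => by
    rw [Real.norm_eq_abs, abs_of_pos (div_pos (hF_pos x) (hsum_pos x)),
      div_le_one (hsum_pos x)]
    linarith [hF_pos (-x)]
  have hweight : AEStronglyMeasurable (fun x => F x / (F x + F (-x))) volume :=
    (hF.div (hF.add (hF.comp measurable_neg))).aestronglyMeasurable
  refine (h.bdd_mul hweight (ae_of_all _ hweight_le)).congr (ae_of_all _ fun x => ?_)
  field_simp [(hsum_pos x).ne']

lemma integral_add_comp_neg_mul_of_even (hF : Measurable F) (hF_pos : ∀ x, 0 < F x)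
    (hg : ∀ x, g (-x) = g x) :
    ∫ x, (F x + F (-x)) * g x = 2 * ∫ x, F x * g x := by
  by_cases hint : Integrable (fun x => F x * g x)
  · have hint_neg : Integrable (fun x => F (-x) * g x) := by
      simpa only [neg_neg, hg] using hint.comp_neg
    have hneg : ∫ x, F (-x) * g x = ∫ x, F x * g x := by
      simpa only [hg] using integral_neg_eq_self (fun x => F x * g x) volume
    simp only [add_mul, integral_add hint hint_neg, hneg, two_mul]
  · rw [integral_undef hint, integral_undef
      (mt (integrable_mul_of_integrable_add_comp_neg_mul hF hF_pos) hint), mul_zero]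

theorem integral_mul_comp_abs (hF : Measurable F) (hF_pos : ∀ x, 0 < F x) :
    ∫ x, F x * W |x| = ∫ x in Ici 0, (F x + F (-x)) * W x := by
  have hfold : ∀ x, F |x| + F (-|x|) = F x + F (-x) := fun x => by
    rcases abs_choice x with h | h <;> rw [h]
    rw [neg_neg, add_comm]
  have h := integral_comp_abs (f := fun x => (F x + F (-x)) * W x)
  simp only [hfold] at h
  rw [integral_Ici_eq_integral_Ioi, ← mul_right_inj' two_ne_zero, ← h,
    integral_add_comp_neg_mul_of_even hF hF_pos fun x => by rw [abs_neg]]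

theorem integral_mul_comp_abs_of_even (hF : Measurable F) (hF_pos : ∀ x, 0 < F x)
    (hF_even : ∀ x, F (-x) = F x) :
    ∫ x, F x * W |x| = 2 * ∫ x in Ici 0, F x * W x := by
  simp only [integral_mul_comp_abs hF hF_pos, hF_even, ← two_mul, mul_assoc, integral_const_mul]

end Folding

theorem integral_gaussian_mul_comp_abs (s m r : ℝ) (W : ℝ → ℝ) (hr : |r| = |m|) :
    ∫ x, exp (-(x - m) ^ 2 / s) * W |x|
      = ∫ x in Ici 0, (exp (-(x - r) ^ 2 / s) + exp (-(x + r) ^ 2 / s)) * W x := by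
  rw [integral_mul_comp_abs (by fun_prop) fun _ => exp_pos _]
  rcases abs_eq_abs.mp hr with rfl | rfl
  · simp only [neg_sub_left, neg_sq, add_comm]
  · simp only [← sub_eq_add_neg, sub_neg_eq_add, neg_sub_left, neg_sq, add_comm]

theorem integral_centered_gaussian_mul_comp_abs (s : ℝ) (W : ℝ → ℝ) :
    ∫ x, exp (-x ^ 2 / s) * W |x| = 2 * ∫ x in Ici 0, exp (-x ^ 2 / s) * W x :=
  integral_mul_comp_abs_of_even (by fun_prop) (fun _ => exp_pos _) fun x => by rw [neg_sq]

theorem stmt_3_general (a σ γ lam : ℝ)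
    (p : Fin 2 → Fin 2 → ℝ)
    (V : ℕ → ℝ → Fin 2 → ℝ) (Q : ℕ → ℝ → Fin 2 → Fin 2 → ℝ)
    (Vf : ℕ → ℝ → Fin 2 → ℝ) (Qf : ℕ → ℝ → Fin 2 → Fin 2 → ℝ)
    -- original value iteration
    (hV0 : ∀ Δ c, V 0 Δ c = 1)
    (hQ0 : ∀ t Δ c, Q (t + 1) Δ c 0 =
      Real.exp (γ * Δ^2) * ∑ cp : Fin 2, p c cp *
        ∫ dp : ℝ, Real.exp (-(dp - a * Δ)^2 / (2 * σ^2)) * V t dp cp)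
    (hQ1 : ∀ t Δ c, Q (t + 1) Δ c 1 =
      (1 - ((c : ℕ) : ℝ)) * Real.exp (γ * (lam + Δ^2)) * ∑ cp : Fin 2, p c cp *
        (∫ dp : ℝ, Real.exp (-(dp - a * Δ)^2 / (2 * σ^2)) * V t dp cp)
      + ((c : ℕ) : ℝ) * Real.exp (γ * lam) * ∑ cp : Fin 2, p c cp *
        (∫ dp : ℝ, Real.exp (-(dp)^2 / (2 * σ^2)) * V t dp cp))
    (hVsucc : ∀ t Δ c, V (t + 1) Δ c = min (Q (t + 1) Δ c 0) (Q (t + 1) Δ c 1))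
    -- folded value iteration on [0,∞)
    (hVf0 : ∀ Δ c, Vf 0 Δ c = 1)
    (hQf0 : ∀ t Δ c, Qf (t + 1) Δ c 0 =
      Real.exp (γ * Δ^2) * ∑ cp : Fin 2, p c cp *
        ∫ dp in Set.Ici (0 : ℝ),
          (Real.exp (-(dp - a * Δ)^2 / (2 * σ^2)) + Real.exp (-(dp + a * Δ)^2 / (2 * σ^2)))
            * Vf t dp cp)
    (hQf1 : ∀ t Δ c, Qf (t + 1) Δ c 1 =
      (1 - ((c : ℕ) : ℝ)) * Real.exp (γ * (lam + Δ^2)) * ∑ cp : Fin 2, p c cp *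
        (∫ dp in Set.Ici (0 : ℝ),
          (Real.exp (-(dp - a * Δ)^2 / (2 * σ^2)) + Real.exp (-(dp + a * Δ)^2 / (2 * σ^2)))
            * Vf t dp cp)
      + 2 * ((c : ℕ) : ℝ) * Real.exp (γ * lam) * ∑ cp : Fin 2, p c cp *
        (∫ dp in Set.Ici (0 : ℝ), Real.exp (-(dp)^2 / (2 * σ^2)) * Vf t dp cp))
    (hVfsucc : ∀ t Δ c, Vf (t + 1) Δ c = min (Qf (t + 1) Δ c 0) (Qf (t + 1) Δ c 1)) :
    (∀ t (Δ : ℝ) (c u : Fin 2), Q (t + 1) Δ c u = Qf (t + 1) |Δ| c u) ∧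
    (∀ t (Δ : ℝ) (c : Fin 2), V t Δ c = Vf t |Δ| c) := by
  have hQ : ∀ t, (∀ Δ c, V t Δ c = Vf t |Δ| c) →
      ∀ Δ c u, Q (t + 1) Δ c u = Qf (t + 1) |Δ| c u := by
    intro t hVt Δ c u
    have hshifted : ∀ cp, ∫ dp, exp (-(dp - a * Δ) ^ 2 / (2 * σ ^ 2)) * V t dp cp
        = ∫ dp in Ici 0, (exp (-(dp - a * |Δ|) ^ 2 / (2 * σ ^ 2))
            + exp (-(dp + a * |Δ|) ^ 2 / (2 * σ ^ 2))) * Vf t dp cp := fun cp => by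
      simp only [hVt]
      exact integral_gaussian_mul_comp_abs _ _ _ (Vf t · cp) (by rw [abs_mul, abs_mul, abs_abs])
    have hcentered : ∀ cp, ∫ dp, exp (-dp ^ 2 / (2 * σ ^ 2)) * V t dp cp
        = 2 * ∫ dp in Ici 0, exp (-dp ^ 2 / (2 * σ ^ 2)) * Vf t dp cp := fun cp => by
      simp only [hVt]
      exact integral_centered_gaussian_mul_comp_abs _ (Vf t · cp)
    fin_cases u
    · simp only [Fin.zero_eta, hQ0, hQf0, hshifted, sq_abs]
    · simp only [Fin.mk_one, hQ1, hQf1, hshifted, hcentered, sq_abs, Fin.sum_univ_two]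
      ring
  have hV : ∀ t Δ c, V t Δ c = Vf t |Δ| c := by
    intro t
    induction t with
    | zero => simp only [hV0, hVf0, implies_true]
    | succ t ih => intro Δ c; rw [hVsucc, hVfsucc, hQ t ih, hQ t ih]
  exact ⟨fun t => hQ t (hV t), hV⟩

/-- Equivalence of the original and folded risk-sensitive MDP value iterations:
the folded iterates agree with the original ones via `Δ ↦ |Δ|`. -/
theorem stmt_3 (a σ γ lam : ℝ) (hσ : 0 < σ) (hγ : 0 < γ) (hlam : 0 < lam)
    (p : Fin 2 → Fin 2 → ℝ) (hp : ∀ c c', 0 ≤ p c c') (hp1 : ∀ c, p c 0 + p c 1 = 1)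
    (V : ℕ → ℝ → Fin 2 → ℝ) (Q : ℕ → ℝ → Fin 2 → Fin 2 → ℝ)
    (Vf : ℕ → ℝ → Fin 2 → ℝ) (Qf : ℕ → ℝ → Fin 2 → Fin 2 → ℝ)
    -- original value iteration
    (hV0 : ∀ Δ c, V 0 Δ c = 1)
    (hQ0 : ∀ t Δ c, Q (t + 1) Δ c 0 =
      Real.exp (γ * Δ^2) * ∑ cp : Fin 2, p c cp *
        ∫ dp : ℝ, Real.exp (-(dp - a * Δ)^2 / (2 * σ^2)) * V t dp cp)
    (hQ1 : ∀ t Δ c, Q (t + 1) Δ c 1 =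
      (1 - ((c : ℕ) : ℝ)) * Real.exp (γ * (lam + Δ^2)) * ∑ cp : Fin 2, p c cp *
        (∫ dp : ℝ, Real.exp (-(dp - a * Δ)^2 / (2 * σ^2)) * V t dp cp)
      + ((c : ℕ) : ℝ) * Real.exp (γ * lam) * ∑ cp : Fin 2, p c cp *
        (∫ dp : ℝ, Real.exp (-(dp)^2 / (2 * σ^2)) * V t dp cp))
    (hVsucc : ∀ t Δ c, V (t + 1) Δ c = min (Q (t + 1) Δ c 0) (Q (t + 1) Δ c 1))
    -- folded value iteration on [0,∞)
    (hVf0 : ∀ Δ c, Vf 0 Δ c = 1)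
    (hQf0 : ∀ t Δ c, Qf (t + 1) Δ c 0 =
      Real.exp (γ * Δ^2) * ∑ cp : Fin 2, p c cp *
        ∫ dp in Set.Ici (0 : ℝ),
          (Real.exp (-(dp - a * Δ)^2 / (2 * σ^2)) + Real.exp (-(dp + a * Δ)^2 / (2 * σ^2)))
            * Vf t dp cp)
    (hQf1 : ∀ t Δ c, Qf (t + 1) Δ c 1 =
      (1 - ((c : ℕ) : ℝ)) * Real.exp (γ * (lam + Δ^2)) * ∑ cp : Fin 2, p c cp *
        (∫ dp in Set.Ici (0 : ℝ),
          (Real.exp (-(dp - a * Δ)^2 / (2 * σ^2)) + Real.exp (-(dp + a * Δ)^2 / (2 * σ^2)))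
            * Vf t dp cp)
      + 2 * ((c : ℕ) : ℝ) * Real.exp (γ * lam) * ∑ cp : Fin 2, p c cp *
        (∫ dp in Set.Ici (0 : ℝ), Real.exp (-(dp)^2 / (2 * σ^2)) * Vf t dp cp))
    (hVfsucc : ∀ t Δ c, Vf (t + 1) Δ c = min (Qf (t + 1) Δ c 0) (Qf (t + 1) Δ c 1)) :
    (∀ t (Δ : ℝ) (c u : Fin 2), Q (t + 1) Δ c u = Qf (t + 1) |Δ| c u) ∧
    (∀ t (Δ : ℝ) (c : Fin 2), V t Δ c = Vf t |Δ| c) :=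
  stmt_3_general a σ γ lam p V Q Vf Qf hV0 hQ0 hQ1 hVsucc hVf0 hQf0 hQf1 hVfsucc
end

section
/- In the folded risk-sensitive MDP with good channel state (c = 1), the difference Δ ↦ Q̃_t(Δ,1;1) - Q̃_t(Δ,1;0) is non-increasing on [0,∞). Consequently, if transmitting is optimal at error level Δ (i.e., Q̃_t(Δ,1;1) ≤ Q̃_t(Δ,1;0)), then transmitting is optimal at every Δ' ≥ Δ; in particular there exists a threshold Δ*_t such that the optimal action at channel state 1 is to transmit if and only if Δ ≥ Δ*_t (threshold possibly +∞). -/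
/-!
Extending `V` evenly to `ℝ` turns the folded integral `∫_{[0,∞)} φ(v, s) V(v) dv` into the
full-line integral `∫ K(u - s) V(|u|) du` against the Gaussian kernel `K`. For `0 ≤ s ≤ s'` the
reflection `u ↦ s + s' - u` swaps `K(u - s)` and `K(u - s')`, so pairing `u` with its mirror image
writes the increment as the integral of `(K(u - s') - K(u - s)) (V|u| - V|s + s' - u|) / 2`, whose
two factors have the same sign. Hence `Q̃_t(Δ,1;0)` is non-decreasing in `Δ`, while `Q̃_t(Δ,1;1)`
does not depend on `Δ`; the set where transmitting is optimal is then an up-set of `[0,∞)`, and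
its infimum in `EReal` is the threshold.
-/

open MeasureTheory Real Set

lemma IntegrableOn.comp_neg_Ici {f : ℝ → ℝ} {c : ℝ} (hf : IntegrableOn f (Ici c)) :
    IntegrableOn (fun x => f (-x)) (Iic (-c)) := by
  have hneg : MeasurableEmbedding fun x : ℝ => -x := (Homeomorph.neg ℝ).measurableEmbedding
  rw [← Measure.map_neg_eq_self (volume : Measure ℝ), hneg.integrableOn_map_iff]
  simpa [Function.comp_def, neg_preimage, neg_Iic] using hf

lemma integral_eq_setIntegral_Ioi_add_comp_neg {g : ℝ → ℝ} (hg : Integrable g) :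
    ∫ x, g x = ∫ x in Ioi 0, (g x + g (-x)) := by
  rw [integral_add hg.integrableOn hg.comp_neg.integrableOn, integral_comp_neg_Ioi, neg_zero,
    add_comm, intervalIntegral.integral_Iic_add_Ioi hg.integrableOn hg.integrableOn]

lemma exp_neg_sq_div_le_of_abs_le (σ : ℝ) {x y : ℝ} (h : |x| ≤ |y|) :
    exp (-y ^ 2 / (2 * σ ^ 2)) ≤ exp (-x ^ 2 / (2 * σ ^ 2)) :=
  exp_le_exp.mpr (div_le_div_of_nonneg_right (neg_le_neg (sq_le_sq.mpr h)) (by positivity))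

section Fold

variable {k V : ℝ → ℝ} (hk : k.Even)
  (hkV : ∀ m, IntegrableOn (fun d => k (d - m) * V d) (Ici 0))
include hk hkV

lemma integrable_comp_sub_mul_comp_abs (t : ℝ) : Integrable (fun u => k (u - t) * V |u|) := by
  have hpos : IntegrableOn (fun u => k (u - t) * V |u|) (Ici 0) :=
    (hkV t).congr_fun (fun u hu => by rw [abs_of_nonneg (mem_Ici.mp hu)]) measurableSet_Ici
  have hneg : IntegrableOn (fun u => k (u - t) * V |u|) (Iic 0) := by
    have h := IntegrableOn.comp_neg_Ici (f := fun d => k (d - -t) * V d) (c := 0) (hkV (-t))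
    rw [neg_zero] at h
    refine h.congr_fun (fun u hu => ?_) measurableSet_Iic
    rw [abs_of_nonpos (mem_Iic.mp hu), ← hk, neg_sub, ← neg_sub_neg]
  simpa using hneg.union hpos

lemma setIntegral_Ici_fold_eq_integral (t : ℝ) :
    ∫ d in Ici 0, (k (d - t) + k (d + t)) * V d = ∫ u, k (u - t) * V |u| := by
  rw [integral_eq_setIntegral_Ioi_add_comp_neg (integrable_comp_sub_mul_comp_abs hk hkV t),
    integral_Ici_eq_integral_Ioi]
  refine setIntegral_congr_fun measurableSet_Ioi (fun u hu => ?_)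
  rw [abs_neg, abs_of_pos hu, show -u - t = -(u + t) by ring, hk]
  ring

end Fold

lemma Function.Even.of_abs_le_imp_le {k : ℝ → ℝ} (hk : ∀ x y, |x| ≤ |y| → k y ≤ k x) :
    k.Even := fun x => le_antisymm (hk _ _ (abs_neg x).ge) (hk _ _ (abs_neg x).le)

lemma integral_comp_sub_mul_le_of_abs_le {k W : ℝ → ℝ} (hk : ∀ x y, |x| ≤ |y| → k y ≤ k x)
    (hW : ∀ u v, |u| ≤ |v| → W u ≤ W v) {s s' : ℝ} (hss' : s ≤ s') (hs : 0 ≤ s + s')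
    (hint : Integrable (fun u => k (u - s) * W u))
    (hint' : Integrable (fun u => k (u - s') * W u)) :
    ∫ u, k (u - s) * W u ≤ ∫ u, k (u - s') * W u := by
  set g : ℝ → ℝ := fun u => k (u - s') * W u - k (u - s) * W u
  have hg : Integrable g := hint'.sub hint
  have hreflect : ∀ u,
      g u + g (s + s' - u) = (k (u - s') - k (u - s)) * (W u - W (s + s' - u)) := by
    intro u
    simp only [g, show s + s' - u - s' = -(u - s) by ring, show s + s' - u - s = -(u - s') by ring,
      Function.Even.of_abs_le_imp_le hk _]
    ring
  have hsymm_nonneg : ∀ u, 0 ≤ g u + g (s + s' - u) := by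
    intro u
    rw [hreflect]
    rcases le_total (s + s') (2 * u) with hu | hu
    · refine mul_nonneg (sub_nonneg.mpr (hk _ _ ?_)) (sub_nonneg.mpr (hW _ _ ?_)) <;>
        exact sq_le_sq.mp (by nlinarith)
    · refine mul_nonneg_of_nonpos_of_nonpos (sub_nonpos.mpr (hk _ _ ?_))
        (sub_nonpos.mpr (hW _ _ ?_)) <;> exact sq_le_sq.mp (by nlinarith)
  have hg_nonneg : 0 ≤ ∫ u, g u := by
    have h : 0 ≤ ∫ u, (g u + g (s + s' - u)) := integral_nonneg hsymm_nonneg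
    rw [integral_add hg (hg.comp_sub_left (s + s')), integral_sub_left_eq_self] at h
    linarith
  linarith [integral_sub hint' hint]

lemma monotoneOn_setIntegral_Ici_fold {k V : ℝ → ℝ} (hk : ∀ x y, |x| ≤ |y| → k y ≤ k x)
    (hV : MonotoneOn V (Ici 0)) (hkV : ∀ m, IntegrableOn (fun d => k (d - m) * V d) (Ici 0)) :
    MonotoneOn (fun s => ∫ d in Ici 0, (k (d - s) + k (d + s)) * V d) (Ici 0) := by
  have hk_even := Function.Even.of_abs_le_imp_le hk
  intro s hs s' hs' hss'
  simp only [setIntegral_Ici_fold_eq_integral hk_even hkV]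
  exact integral_comp_sub_mul_le_of_abs_le hk
    (fun u v huv => hV (abs_nonneg u) (abs_nonneg v) huv) hss' (add_nonneg hs hs')
    (integrable_comp_sub_mul_comp_abs hk_even hkV s)
    (integrable_comp_sub_mul_comp_abs hk_even hkV s')

lemma exists_EReal_threshold_of_upward_closed {s : Set ℝ} {P : ℝ → Prop}
    (hP : ∀ x ∈ s, ∀ y ∈ s, x ≤ y → P x → P y) :
    ∃ t : EReal, ∀ x ∈ s, (t < x → P x) ∧ (P x → t ≤ x) := by
  refine ⟨sInf (Real.toEReal '' {x ∈ s | P x}), fun x hx => ⟨fun hlt => ?_, fun h => ?_⟩⟩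
  · obtain ⟨_, ⟨y, ⟨hys, hy⟩, rfl⟩, hyx⟩ := sInf_lt_iff.mp hlt
    exact hP y hys x hx (EReal.coe_le_coe_iff.mp hyx.le) hy
  · exact sInf_le ⟨x, ⟨hx, h⟩, rfl⟩

theorem stmt_6_general (a σ γ lam : ℝ) (ha : 0 ≤ a) (hγ : 0 < γ)
    (p : Fin 2 → ℝ) (hp : ∀ c, 0 ≤ p c)
    (Vprev : ℝ → Fin 2 → ℝ)
    (hVnonneg : ∀ d c, 0 ≤ Vprev d c)
    (hVmono : ∀ c, MonotoneOn (fun d => Vprev d c) (Set.Ici (0 : ℝ)))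
    (hVint : ∀ (c : Fin 2) (m : ℝ),
      IntegrableOn (fun d => Real.exp (-(d - m)^2 / (2 * σ^2)) * Vprev d c) (Set.Ici (0 : ℝ)))
    (Q : ℝ → Fin 2 → ℝ)
    (hQ0 : ∀ Δ, Q Δ 0 =
      Real.exp (γ * Δ^2) * ∑ cp : Fin 2, p cp *
        ∫ dp in Set.Ici (0 : ℝ),
          (Real.exp (-(dp - a * Δ)^2 / (2 * σ^2)) + Real.exp (-(dp + a * Δ)^2 / (2 * σ^2)))
            * Vprev dp cp)
    (hQ1 : ∀ Δ, Q Δ 1 =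
      2 * Real.exp (γ * lam) * ∑ cp : Fin 2, p cp *
        ∫ dp in Set.Ici (0 : ℝ), Real.exp (-(dp)^2 / (2 * σ^2)) * Vprev dp cp) :
    AntitoneOn (fun Δ => Q Δ 1 - Q Δ 0) (Set.Ici (0 : ℝ)) ∧
    (∀ Δ Δ' : ℝ, 0 ≤ Δ → Δ ≤ Δ' → Q Δ 1 ≤ Q Δ 0 → Q Δ' 1 ≤ Q Δ' 0) ∧
    (∃ Δstar : EReal, ∀ Δ : ℝ, 0 ≤ Δ →
      (Δstar < (Δ : EReal) → Q Δ 1 ≤ Q Δ 0) ∧ (Q Δ 1 ≤ Q Δ 0 → Δstar ≤ (Δ : EReal))) := by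
  set F : Fin 2 → ℝ → ℝ := fun c s => ∫ d in Ici 0,
    (exp (-(d - s) ^ 2 / (2 * σ ^ 2)) + exp (-(d + s) ^ 2 / (2 * σ ^ 2))) * Vprev d c
  have hF_mono : ∀ c, MonotoneOn (F c) (Ici 0) := fun c =>
    monotoneOn_setIntegral_Ici_fold (fun _ _ => exp_neg_sq_div_le_of_abs_le σ) (hVmono c) (hVint c)
  have hF_nonneg : ∀ c s, 0 ≤ F c s := fun c s =>
    setIntegral_nonneg measurableSet_Ici fun d _ => mul_nonneg (by positivity) (hVnonneg d c)
  have hQ0_mono : MonotoneOn (fun Δ => Q Δ 0) (Ici 0) := by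
    intro Δ hΔ Δ' hΔ' hΔΔ'
    simp only [hQ0]
    refine mul_le_mul (by gcongr) (Finset.sum_le_sum fun c _ => ?_)
      (Finset.sum_nonneg fun c _ => mul_nonneg (hp c) (hF_nonneg c _)) (exp_pos _).le
    exact mul_le_mul_of_nonneg_left (hF_mono c (mul_nonneg ha hΔ) (mul_nonneg ha hΔ')
      (mul_le_mul_of_nonneg_left hΔΔ' ha)) (hp c)
  have hanti : AntitoneOn (fun Δ => Q Δ 1 - Q Δ 0) (Ici 0) := fun Δ hΔ Δ' hΔ' hΔΔ' => by
    simp only [hQ1 Δ, hQ1 Δ']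
    linarith [hQ0_mono hΔ hΔ' hΔΔ']
  have hupward : ∀ Δ Δ' : ℝ, 0 ≤ Δ → Δ ≤ Δ' → Q Δ 1 ≤ Q Δ 0 → Q Δ' 1 ≤ Q Δ' 0 :=
    fun Δ Δ' hΔ hΔΔ' h => by
      linarith [hanti (mem_Ici.mpr hΔ) (mem_Ici.mpr (hΔ.trans hΔΔ')) hΔΔ']
  exact ⟨hanti, hupward, exists_EReal_threshold_of_upward_closed fun Δ hΔ Δ' _ => hupward Δ Δ' hΔ⟩

/-- Threshold structure in the good channel state (`c = 1`): the difference
`Δ ↦ Q̃_t(Δ,1;1) - Q̃_t(Δ,1;0)` is non-increasing on `[0,∞)`, transmitting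
remains optimal for all larger errors, and there is a threshold `Δ*`
(possibly `+∞`) such that transmitting is optimal exactly beyond it. -/
theorem stmt_6 (a σ γ lam : ℝ) (ha : 0 ≤ a) (hσ : 0 < σ) (hγ : 0 < γ) (hlam : 0 < lam)
    (p : Fin 2 → ℝ) (hp : ∀ c, 0 ≤ p c) (hp1 : p 0 + p 1 = 1)
    (Vprev : ℝ → Fin 2 → ℝ)
    (hVmeas : ∀ c, Measurable (fun d => Vprev d c))
    (hVnonneg : ∀ d c, 0 ≤ Vprev d c)
    (hVmono : ∀ c, MonotoneOn (fun d => Vprev d c) (Set.Ici (0 : ℝ)))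
    (hVint : ∀ (c : Fin 2) (m : ℝ),
      IntegrableOn (fun d => Real.exp (-(d - m)^2 / (2 * σ^2)) * Vprev d c) (Set.Ici (0 : ℝ)))
    (Q : ℝ → Fin 2 → ℝ)
    (hQ0 : ∀ Δ, Q Δ 0 =
      Real.exp (γ * Δ^2) * ∑ cp : Fin 2, p cp *
        ∫ dp in Set.Ici (0 : ℝ),
          (Real.exp (-(dp - a * Δ)^2 / (2 * σ^2)) + Real.exp (-(dp + a * Δ)^2 / (2 * σ^2)))
            * Vprev dp cp)
    (hQ1 : ∀ Δ, Q Δ 1 =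
      2 * Real.exp (γ * lam) * ∑ cp : Fin 2, p cp *
        ∫ dp in Set.Ici (0 : ℝ), Real.exp (-(dp)^2 / (2 * σ^2)) * Vprev dp cp) :
    AntitoneOn (fun Δ => Q Δ 1 - Q Δ 0) (Set.Ici (0 : ℝ)) ∧
    (∀ Δ Δ' : ℝ, 0 ≤ Δ → Δ ≤ Δ' → Q Δ 1 ≤ Q Δ 0 → Q Δ' 1 ≤ Q Δ' 0) ∧
    (∃ Δstar : EReal, ∀ Δ : ℝ, 0 ≤ Δ →
      (Δstar < (Δ : EReal) → Q Δ 1 ≤ Q Δ 0) ∧ (Q Δ 1 ≤ Q Δ 0 → Δstar ≤ (Δ : EReal))) :=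
  stmt_6_general a σ γ lam ha hγ p hp Vprev hVnonneg hVmono hVint Q hQ0 hQ1
end

section
/- For the folded Gaussian kernel: if V : [0,∞) → [0,∞) is measurable, non-decreasing, and integrable against Gaussian tails, then the map s ↦ e^{γ s²} ∫_{[0,∞)} φ(v, a s) V(v) dv is non-decreasing in s ≥ 0 (where a ≥ 0, γ > 0). -/
/-!
Write `φ_t(v) = e^{-(v-t)²/(2σ²)} + e^{-(v+t)²/(2σ²)}`. Folding the Gaussian shows that
`∫_{[0,∞)} φ_t` does not depend on `t`, and `φ_t(v) = 2 e^{-v²/(2σ²)} e^{-t²/(2σ²)} cosh(tv/σ²)`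
shows that for `t₁ ≤ t₂` the difference `φ_{t₂} - φ_{t₁}` changes sign at most once on `[0,∞)`,
from negative to non-negative. A difference of equal-mass kernels with this single-crossing
property integrates every non-decreasing `V` to a non-negative number, so
`t ↦ ∫ φ_t V` is non-decreasing; the factor `e^{γs²}` is non-decreasing and positive.
-/

open MeasureTheory Real Set

theorem setIntegral_mul_eq_zero_of_nonneg {α : Type*} [MeasurableSpace α] {μ : Measure α}
    {s : Set α} (hs : MeasurableSet s) {D : α → ℝ} (hD : ∀ x ∈ s, 0 ≤ D x)
    (hDi : IntegrableOn D s μ) (hD0 : ∫ x in s, D x ∂μ = 0) (V : α → ℝ) :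
    ∫ x in s, D x * V x ∂μ = 0 := by
  have hDae : D =ᵐ[μ.restrict s] 0 :=
    (setIntegral_eq_zero_iff_of_nonneg_ae (ae_restrict_of_forall_mem hs hD) hDi).1 hD0
  calc ∫ x in s, D x * V x ∂μ = ∫ _ in s, (0 : ℝ) ∂μ :=
        integral_congr_ae (hDae.mono fun x hx => by simp [hx])
    _ = 0 := integral_zero _ _

theorem setIntegral_mul_nonneg_of_single_crossing {α : Type*} [MeasurableSpace α] [LinearOrder α]
    {μ : Measure α} {s : Set α} (hs : MeasurableSet s) {D V : α → ℝ}
    (hDi : IntegrableOn D s μ) (hDVi : IntegrableOn (fun x => D x * V x) s μ)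
    (hD0 : ∫ x in s, D x ∂μ = 0) (hV : MonotoneOn V s)
    (hcross : ∀ x ∈ s, ∀ y ∈ s, x ≤ y → 0 ≤ D x → 0 ≤ D y) :
    0 ≤ ∫ x in s, D x * V x ∂μ := by
  by_cases hpos : ∃ u ∈ s, 0 ≤ D u
  swap
  · push Not at hpos
    have h := setIntegral_mul_eq_zero_of_nonneg hs (D := fun x => -D x)
      (fun x hx => (neg_pos.2 (hpos x hx)).le) hDi.neg (by rw [integral_neg, hD0, neg_zero]) V
    simp only [neg_mul, integral_neg, neg_eq_zero] at h
    exact h.ge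
  by_cases hneg : ∃ n ∈ s, D n < 0
  swap
  · push Not at hneg
    exact (setIntegral_mul_eq_zero_of_nonneg hs hneg hDi hD0 V).ge
  obtain ⟨u, hu, hDu⟩ := hpos
  set N := {n | n ∈ s ∧ D n < 0}
  have hlt : ∀ n ∈ N, ∀ y ∈ s, 0 ≤ D y → n < y := fun n ⟨hn, hDn⟩ y hy hDy =>
    lt_of_not_ge fun hyn => (hcross y hy n hn hyn hDy).not_gt hDn
  have hbdd : BddAbove (V '' N) :=
    ⟨V u, by rintro _ ⟨n, hnN, rfl⟩; exact hV hnN.1 hu (hlt n hnN u hu hDu).le⟩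
  -- `c` separates the values of `V` where `D < 0` from those where `D ≥ 0`.
  set c := sSup (V '' N)
  have hpt : ∀ x ∈ s, 0 ≤ D x * (V x - c) := by
    intro x hx
    rcases lt_or_ge (D x) 0 with hDx | hDx
    · exact mul_nonneg_of_nonpos_of_nonpos hDx.le
        (sub_nonpos.2 (le_csSup hbdd ⟨x, ⟨hx, hDx⟩, rfl⟩))
    · obtain ⟨n, hn⟩ := hneg
      refine mul_nonneg hDx (sub_nonneg.2 (csSup_le ⟨V n, n, hn, rfl⟩ ?_))
      rintro _ ⟨m, hmN, rfl⟩
      exact hV hmN.1 hx (hlt m hmN x hx hDx).le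
  calc 0 ≤ ∫ x in s, D x * (V x - c) ∂μ := setIntegral_nonneg hs hpt
    _ = ∫ x in s, D x * V x ∂μ - c * ∫ x in s, D x ∂μ := by
        simp only [mul_sub]
        rw [integral_sub hDVi (hDi.mul_const c), integral_mul_const, mul_comm]
    _ = ∫ x in s, D x * V x ∂μ := by rw [hD0, mul_zero, sub_zero]

theorem integral_Ici_add_comp_neg {E : Type*} [NormedAddCommGroup E] [NormedSpace ℝ E]
    {f : ℝ → E} (hf : Integrable f) : ∫ x in Ici 0, (f x + f (-x)) = ∫ x, f x := by
  rw [integral_add hf.integrableOn hf.comp_neg.integrableOn, integral_Ici_eq_integral_Ioi,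
    integral_Ici_eq_integral_Ioi, integral_comp_neg_Ioi, neg_zero, add_comm,
    intervalIntegral.integral_Iic_add_Ioi hf.integrableOn hf.integrableOn]

/-- Equivalently, `x ↦ cosh (b * x) / cosh (a * x)` is non-decreasing on `[0, ∞)`. -/
theorem cosh_mul_cosh_le_cosh_mul_cosh {a b x y : ℝ} (ha : 0 ≤ a) (hab : a ≤ b) (hx : 0 ≤ x)
    (hxy : x ≤ y) : cosh (b * x) * cosh (a * y) ≤ cosh (b * y) * cosh (a * x) := by
  have cosh_mul_cosh (u w : ℝ) : cosh u * cosh w = (cosh (u + w) + cosh (u - w)) / 2 := by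
    rw [cosh_add, cosh_sub]; ring
  have hsum : cosh (b * x + a * y) ≤ cosh (b * y + a * x) :=
    cosh_le_cosh.2 <| abs_le_abs (by nlinarith) (by nlinarith)
  have hdiff : cosh (b * x - a * y) ≤ cosh (b * y - a * x) :=
    cosh_le_cosh.2 <| abs_le_abs (by nlinarith) (by nlinarith)
  rw [cosh_mul_cosh, cosh_mul_cosh]
  linarith

noncomputable def foldedGaussian (σ t v : ℝ) : ℝ :=
  exp (-(v - t) ^ 2 / (2 * σ ^ 2)) + exp (-(v + t) ^ 2 / (2 * σ ^ 2))

theorem foldedGaussian_eq_mul_cosh (σ t v : ℝ) :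
    foldedGaussian σ t v =
      2 * exp (-v ^ 2 / (2 * σ ^ 2)) * (exp (-t ^ 2 / (2 * σ ^ 2)) * cosh (t / σ ^ 2 * v)) := by
  rw [foldedGaussian, cosh_eq, show -(v - t) ^ 2 / (2 * σ ^ 2) =
      -v ^ 2 / (2 * σ ^ 2) + -t ^ 2 / (2 * σ ^ 2) + t / σ ^ 2 * v by ring,
    show -(v + t) ^ 2 / (2 * σ ^ 2) =
      -v ^ 2 / (2 * σ ^ 2) + -t ^ 2 / (2 * σ ^ 2) + -(t / σ ^ 2 * v) by ring]
  simp only [exp_add]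
  ring

theorem foldedGaussian_eq_add_comp_neg (σ t v : ℝ) :
    foldedGaussian σ t v =
      exp (-(v - t) ^ 2 / (2 * σ ^ 2)) + exp (-(-v - t) ^ 2 / (2 * σ ^ 2)) := by
  rw [foldedGaussian, ← neg_add', neg_sq]

theorem foldedGaussian_le_of_le {σ t₁ t₂ v w : ℝ} (ht₁ : 0 ≤ t₁) (ht : t₁ ≤ t₂) (hv : 0 ≤ v)
    (hvw : v ≤ w) (h : foldedGaussian σ t₁ v ≤ foldedGaussian σ t₂ v) :
    foldedGaussian σ t₁ w ≤ foldedGaussian σ t₂ w := by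
  simp only [foldedGaussian_eq_mul_cosh] at h ⊢
  rw [mul_le_mul_iff_right₀ (by positivity)] at h ⊢
  set B₁ := exp (-t₁ ^ 2 / (2 * σ ^ 2))
  set B₂ := exp (-t₂ ^ 2 / (2 * σ ^ 2))
  have hcosh := cosh_mul_cosh_le_cosh_mul_cosh (by positivity : 0 ≤ t₁ / σ ^ 2)
    (div_le_div_of_nonneg_right ht (sq_nonneg σ)) hv hvw
  refine le_of_mul_le_mul_right ?_ (cosh_pos (t₁ / σ ^ 2 * v))
  calc B₁ * cosh (t₁ / σ ^ 2 * w) * cosh (t₁ / σ ^ 2 * v)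
      ≤ B₂ * cosh (t₂ / σ ^ 2 * v) * cosh (t₁ / σ ^ 2 * w) := by
        rw [mul_right_comm]; gcongr
    _ ≤ B₂ * cosh (t₂ / σ ^ 2 * w) * cosh (t₁ / σ ^ 2 * v) := by
        rw [mul_assoc, mul_assoc]; gcongr

theorem integrable_exp_neg_sub_sq_div {σ : ℝ} (hσ : σ ≠ 0) (t : ℝ) :
    Integrable fun v => exp (-(v - t) ^ 2 / (2 * σ ^ 2)) := by
  have h := (integrable_exp_neg_mul_sq (by positivity : 0 < 1 / (2 * σ ^ 2))).comp_sub_right t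
  refine h.congr (ae_of_all _ fun v => ?_)
  ring_nf

theorem integral_Ici_foldedGaussian {σ : ℝ} (hσ : σ ≠ 0) (t : ℝ) :
    ∫ v in Ici 0, foldedGaussian σ t v = ∫ v, exp (-v ^ 2 / (2 * σ ^ 2)) := by
  simp only [foldedGaussian_eq_add_comp_neg]
  rw [integral_Ici_add_comp_neg (integrable_exp_neg_sub_sq_div hσ t),
    integral_sub_right_eq_self (fun v => exp (-v ^ 2 / (2 * σ ^ 2)))]

theorem integrableOn_foldedGaussian {σ : ℝ} (hσ : σ ≠ 0) (t : ℝ) :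
    IntegrableOn (foldedGaussian σ t) (Ici 0) := by
  simp only [funext (foldedGaussian_eq_add_comp_neg σ t)]
  exact ((integrable_exp_neg_sub_sq_div hσ t).add
    (integrable_exp_neg_sub_sq_div hσ t).comp_neg).integrableOn

theorem integrableOn_foldedGaussian_mul {σ : ℝ} {V : ℝ → ℝ}
    (hVint : ∀ m : ℝ, IntegrableOn (fun v => exp (-(v - m) ^ 2 / (2 * σ ^ 2)) * V v) (Ici 0))
    (t : ℝ) : IntegrableOn (fun v => foldedGaussian σ t v * V v) (Ici 0) := by
  simpa only [foldedGaussian, add_mul, sub_neg_eq_add, Pi.add_def] using (hVint t).add (hVint (-t))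

theorem setIntegral_foldedGaussian_mul_mono {σ t₁ t₂ : ℝ} {V : ℝ → ℝ} (hσ : σ ≠ 0)
    (hV : MonotoneOn V (Ici 0))
    (hVint : ∀ m : ℝ, IntegrableOn (fun v => exp (-(v - m) ^ 2 / (2 * σ ^ 2)) * V v) (Ici 0))
    (ht₁ : 0 ≤ t₁) (ht : t₁ ≤ t₂) :
    ∫ v in Ici 0, foldedGaussian σ t₁ v * V v ≤ ∫ v in Ici 0, foldedGaussian σ t₂ v * V v := by
  have hDV : 0 ≤ ∫ v in Ici 0, (foldedGaussian σ t₂ v - foldedGaussian σ t₁ v) * V v := by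
    refine setIntegral_mul_nonneg_of_single_crossing measurableSet_Ici
      ((integrableOn_foldedGaussian hσ t₂).sub (integrableOn_foldedGaussian hσ t₁)) ?_ ?_ hV
      fun v hv w _ hvw h => sub_nonneg.2 <| foldedGaussian_le_of_le ht₁ ht hv hvw (sub_nonneg.1 h)
    · simpa only [sub_mul, Pi.sub_def] using
        (integrableOn_foldedGaussian_mul hVint t₂).sub (integrableOn_foldedGaussian_mul hVint t₁)
    · rw [integral_sub (integrableOn_foldedGaussian hσ t₂) (integrableOn_foldedGaussian hσ t₁),
        integral_Ici_foldedGaussian hσ, integral_Ici_foldedGaussian hσ, sub_self]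
  simp only [sub_mul] at hDV
  rwa [integral_sub (integrableOn_foldedGaussian_mul hVint t₂)
    (integrableOn_foldedGaussian_mul hVint t₁), sub_nonneg] at hDV

theorem stmt_7_general (a σ γ : ℝ) (ha : 0 ≤ a) (hσ : 0 < σ) (hγ : 0 < γ)
    (V : ℝ → ℝ) (hVnonneg : ∀ v, 0 ≤ V v)
    (hVmono : MonotoneOn V (Set.Ici (0 : ℝ)))
    (hVint : ∀ m : ℝ,
      IntegrableOn (fun v => Real.exp (-(v - m)^2 / (2 * σ^2)) * V v) (Set.Ici (0 : ℝ))) :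
    MonotoneOn
      (fun s => Real.exp (γ * s^2) *
        ∫ v in Set.Ici (0 : ℝ),
          (Real.exp (-(v - a * s)^2 / (2 * σ^2)) + Real.exp (-(v + a * s)^2 / (2 * σ^2)))
            * V v)
      (Set.Ici (0 : ℝ)) := by
  change MonotoneOn (fun s => exp (γ * s ^ 2) * ∫ v in Ici 0, foldedGaussian σ (a * s) v * V v) _
  intro s₁ hs₁ s₂ _ hs
  have hexp : exp (γ * s₁ ^ 2) ≤ exp (γ * s₂ ^ 2) := by gcongr
  have hint := setIntegral_foldedGaussian_mul_mono hσ.ne' hVmono hVint (mul_nonneg ha hs₁)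
    (mul_le_mul_of_nonneg_left hs ha)
  have hnonneg : 0 ≤ ∫ v in Ici 0, foldedGaussian σ (a * s₁) v * V v :=
    setIntegral_nonneg measurableSet_Ici fun v _ =>
      mul_nonneg (add_nonneg (exp_pos _).le (exp_pos _).le) (hVnonneg v)
  exact mul_le_mul hexp hint hnonneg (exp_pos _).le

/-- Key monotonicity step: for a non-negative, measurable, non-decreasing `V`
on `[0,∞)` with finite Gaussian integrals, the map
`s ↦ e^{γs²} ∫_{[0,∞)} φ(v, a s) V(v) dv` is non-decreasing in `s ≥ 0`,
where `φ(v,s) = e^{-(v-s)²/(2σ²)} + e^{-(v+s)²/(2σ²)}`. -/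
theorem stmt_7 (a σ γ : ℝ) (ha : 0 ≤ a) (hσ : 0 < σ) (hγ : 0 < γ)
    (V : ℝ → ℝ) (hVmeas : Measurable V) (hVnonneg : ∀ v, 0 ≤ V v)
    (hVmono : MonotoneOn V (Set.Ici (0 : ℝ)))
    (hVint : ∀ m : ℝ,
      IntegrableOn (fun v => Real.exp (-(v - m)^2 / (2 * σ^2)) * V v) (Set.Ici (0 : ℝ))) :
    MonotoneOn
      (fun s => Real.exp (γ * s^2) *
        ∫ v in Set.Ici (0 : ℝ),
          (Real.exp (-(v - a * s)^2 / (2 * σ^2)) + Real.exp (-(v + a * s)^2 / (2 * σ^2)))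
            * V v)
      (Set.Ici (0 : ℝ)) :=
  stmt_7_general a σ γ ha hσ hγ V hVnonneg hVmono hVint
end

section
/- Folded-kernel decomposition of the dominance inequality: for σ > 0, s' ≥ s ≥ 0, and r ≥ 0, one has ∫_r^∞ e^{-(v-s')²/(2σ²)} dv + ∫_r^∞ e^{-(v+s')²/(2σ²)} dv - ∫_r^∞ e^{-(v-s)²/(2σ²)} dv - ∫_r^∞ e^{-(v+s)²/(2σ²)} dv = ∫_{(r-s')/σ}^{(r-s)/σ} e^{-z²/2}σ dz - ∫_{(r+s)/σ}^{(r+s')/σ} e^{-z²/2}σ dz ≥ 0, since the Gaussian density is even and unimodal and the two integration intervals have equal length |s'-s|/σ with the first interval closer to the origin. -/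
/-!
Substituting `z = (v ∓ c) / σ` turns each tail integral into a standard-Gaussian tail
`∫_{(r ∓ c)/σ}^∞`, and differences of tails are interval integrals. For the sign, a function
`f` with `f y ≤ f x` whenever `|x| ≤ |y|` integrates to more over an interval of length `L`
whose midpoint is closer to `0`: reflecting through `0` puts both midpoints in `[0, ∞)`, and
sliding an interval `[a, a + L]` to the right trades `f x` for the smaller `f (x + L)`.
-/

open MeasureTheory Real Set intervalIntegral

section Translation
variable {E : Type*} [NormedAddCommGroup E] [NormedSpace ℝ E]

theorem integral_Ioi_comp_sub (f : ℝ → E) (r c : ℝ) :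
    ∫ v in Ioi r, f (v - c) = ∫ v in Ioi (r - c), f v := by
  have := (measurePreserving_sub_right volume c).setIntegral_preimage_emb
    (measurableEmbedding_subRight c) f (Ioi (r - c))
  simpa only [preimage_sub_const_Ioi, sub_add_cancel] using this

theorem integral_Ioi_comp_sub_div (f : ℝ → E) {σ : ℝ} (hσ : 0 < σ) (r c : ℝ) :
    ∫ v in Ioi r, f ((v - c) / σ) = σ • ∫ z in Ioi ((r - c) / σ), f z := by
  rw [integral_Ioi_comp_sub (fun v => f (v / σ)) r c]
  simp only [div_eq_inv_mul]
  rw [integral_comp_mul_left_Ioi f _ (inv_pos.2 hσ), inv_inv]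
end Translation

def IsSymmUnimodal (f : ℝ → ℝ) : Prop := ∀ x y, |x| ≤ |y| → f y ≤ f x

namespace IsSymmUnimodal
variable {f : ℝ → ℝ}

theorem comp_neg (hf : IsSymmUnimodal f) (x : ℝ) : f (-x) = f x :=
  le_antisymm (hf _ _ (abs_neg x).ge) (hf _ _ (abs_neg x).le)

theorem intervalIntegrable (hf : IsSymmUnimodal f) (a b : ℝ) :
    IntervalIntegrable f volume a b := by
  have to_zero : ∀ c, IntervalIntegrable f volume c 0 := by
    intro c
    rcases le_total c 0 with hc | hc
    · refine MonotoneOn.intervalIntegrable fun x hx y hy hxy => hf _ _ ?_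
      rw [uIcc_of_le hc] at hx hy
      rw [abs_of_nonpos hx.2, abs_of_nonpos hy.2]; linarith
    · refine AntitoneOn.intervalIntegrable fun x hx y hy hxy => hf _ _ ?_
      rw [uIcc_of_ge hc] at hx hy
      rwa [abs_of_nonneg hx.1, abs_of_nonneg hy.1]
  exact (to_zero a).trans (to_zero b).symm

theorem integral_reflect (hf : IsSymmUnimodal f) (a L : ℝ) :
    ∫ x in -a - L..-a - L + L, f x = ∫ x in a..a + L, f x := by
  calc ∫ x in -a - L..-a - L + L, f x = ∫ x in -(a + L)..-a, f x := by congr 1 <;> ring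
    _ = ∫ x in a..a + L, f (-x) := (integral_comp_neg _).symm
    _ = ∫ x in a..a + L, f x := by simp only [hf.comp_neg]

theorem integral_le_of_center_le (hf : IsSymmUnimodal f) {a b L : ℝ} (hL : 0 ≤ L)
    (ha : -L ≤ 2 * a) (hab : a ≤ b) :
    ∫ x in b..b + L, f x ≤ ∫ x in a..a + L, f x := by
  have hshift : ∫ x in a + L..b + L, f x ≤ ∫ x in a..b, f x := by
    rw [← integral_comp_add_right]
    refine integral_mono_on hab
      (by simpa using (hf.intervalIntegrable (a + L) (b + L)).comp_add_right L)
      (hf.intervalIntegrable _ _) fun x hx => hf _ _ ?_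
    rw [abs_of_nonneg (by linarith [hx.1] : 0 ≤ x + L), abs_le]
    constructor <;> linarith [hx.1]
  have := integral_interval_sub_interval_comm (hf.intervalIntegrable a (a + L))
    (hf.intervalIntegrable b (b + L)) (hf.intervalIntegrable a b)
  linarith

theorem integral_le_of_abs_center_le (hf : IsSymmUnimodal f) {a b L : ℝ} (hL : 0 ≤ L)
    (hab : |2 * a + L| ≤ |2 * b + L|) :
    ∫ x in b..b + L, f x ≤ ∫ x in a..a + L, f x := by
  have reflect : ∀ c, ∃ c', 2 * c' + L = |2 * c + L| ∧
      ∫ x in c..c + L, f x = ∫ x in c'..c' + L, f x := by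
    intro c
    rcases le_total 0 (2 * c + L) with hc | hc
    · exact ⟨c, by rw [abs_of_nonneg hc], rfl⟩
    · exact ⟨-c - L, by rw [abs_of_nonpos hc]; ring, (hf.integral_reflect c L).symm⟩
  obtain ⟨a', ha', ha⟩ := reflect a
  obtain ⟨b', hb', hb⟩ := reflect b
  rw [ha, hb]
  exact hf.integral_le_of_center_le hL (by linarith [abs_nonneg (2 * a + L)]) (by linarith)

end IsSymmUnimodal

theorem isSymmUnimodal_gaussian {σ : ℝ} (hσ : 0 ≤ σ) :
    IsSymmUnimodal fun z => exp (-z ^ 2 / 2) * σ := by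
  intro x y hxy
  have := sq_le_sq.2 hxy
  exact mul_le_mul_of_nonneg_right (exp_le_exp.2 (by linarith)) hσ

theorem integrable_gaussian (σ : ℝ) : Integrable fun z : ℝ => exp (-z ^ 2 / 2) * σ := by
  convert (integrable_exp_neg_mul_sq (b := 2⁻¹) (by norm_num)).mul_const σ using 4
  ring

theorem integral_Ioi_gaussian_sub {σ : ℝ} (hσ : 0 < σ) (r c : ℝ) :
    ∫ v in Ioi r, exp (-(v - c) ^ 2 / (2 * σ ^ 2))
      = ∫ z in Ioi ((r - c) / σ), exp (-z ^ 2 / 2) * σ := by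
  have standardize : ∀ v, exp (-(v - c) ^ 2 / (2 * σ ^ 2)) = exp (-((v - c) / σ) ^ 2 / 2) := by
    intro v; field_simp
  simp_rw [standardize]
  rw [integral_Ioi_comp_sub_div (fun z => exp (-z ^ 2 / 2)) hσ, MeasureTheory.integral_mul_const,
    smul_eq_mul, mul_comm]

theorem integral_Ioi_gaussian_add {σ : ℝ} (hσ : 0 < σ) (r c : ℝ) :
    ∫ v in Ioi r, exp (-(v + c) ^ 2 / (2 * σ ^ 2))
      = ∫ z in Ioi ((r + c) / σ), exp (-z ^ 2 / 2) * σ := by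
  simpa only [sub_neg_eq_add] using integral_Ioi_gaussian_sub hσ r (-c)

/-- Folded-kernel decomposition of the dominance inequality: for `σ > 0`,
`s' ≥ s ≥ 0`, `r ≥ 0`, the difference of folded Gaussian tail masses equals a
difference of two standard-Gaussian interval integrals of equal length, the
first interval being closer to the origin, and this difference is
non-negative. -/
theorem stmt_19 (σ : ℝ) (hσ : 0 < σ) (s s' : ℝ) (hs : 0 ≤ s) (hss' : s ≤ s')
    (r : ℝ) (hr : 0 ≤ r) :
    ((∫ v in Set.Ioi r, Real.exp (-(v - s')^2 / (2 * σ^2)))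
      + (∫ v in Set.Ioi r, Real.exp (-(v + s')^2 / (2 * σ^2)))
      - (∫ v in Set.Ioi r, Real.exp (-(v - s)^2 / (2 * σ^2)))
      - (∫ v in Set.Ioi r, Real.exp (-(v + s)^2 / (2 * σ^2)))
      = (∫ z in ((r - s') / σ)..((r - s) / σ), Real.exp (-z^2 / 2) * σ)
        - (∫ z in ((r + s) / σ)..((r + s') / σ), Real.exp (-z^2 / 2) * σ)) ∧
    0 ≤ (∫ z in ((r - s') / σ)..((r - s) / σ), Real.exp (-z^2 / 2) * σ)
        - (∫ z in ((r + s) / σ)..((r + s') / σ), Real.exp (-z^2 / 2) * σ) := by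
  have hg : ∀ a, IntegrableOn (fun z => exp (-z ^ 2 / 2) * σ) (Ioi a) := fun a =>
    (integrable_gaussian σ).integrableOn
  constructor
  · rw [integral_Ioi_gaussian_sub hσ, integral_Ioi_gaussian_sub hσ, integral_Ioi_gaussian_add hσ,
      integral_Ioi_gaussian_add hσ, ← integral_Ioi_sub_Ioi (hg _) (by gcongr),
      ← integral_Ioi_sub_Ioi (hg _) (by gcongr)]
    ring
  · set L := (s' - s) / σ
    have hL : 0 ≤ L := div_nonneg (by linarith) hσ.le
    have h₁ : (r - s) / σ = (r - s') / σ + L := by ring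
    have h₂ : (r + s') / σ = (r + s) / σ + L := by ring
    have hcenter : |2 * ((r - s') / σ) + L| ≤ |2 * ((r + s) / σ) + L| := by
      rw [show 2 * ((r - s') / σ) + L = (2 * r - s - s') / σ by ring,
        show 2 * ((r + s) / σ) + L = (2 * r + s + s') / σ by ring, abs_div, abs_div]
      refine div_le_div_of_nonneg_right ?_ (abs_nonneg σ)
      rw [abs_of_nonneg (by linarith : 0 ≤ 2 * r + s + s'), abs_le]
      constructor <;> linarith
    rw [h₁, h₂, sub_nonneg]
    exact (isSymmUnimodal_gaussian hσ.le).integral_le_of_abs_center_le hL hcenter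
end
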